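/- arXiv:2405.04795 — 2 statements merged into one kernel-verified Lean document; each statement's English description precedes it below -/
import Mathlib

section
/- Let u : [0,T] → ℝ be differentiable, let β : [0,T] → ℝ be continuous and nonnegative, and let λ > 0. If u(0) = 1 and u'(t) ≤ -λ β(t) u(t) + β(t) for all t ∈ [0,T], then u(t) ≤ (1/λ)(1 - e^(-λ B(t))) + e^(-λ B(t)) where B(t) = ∫₀ᵗ β(s) ds, and consequently u(t) ≤ max{1, 1/λ} for all t ∈ [0,T]. -/
open Set intervalIntegral

/-- Grönwall-type comparison bound: if `u(0) = 1` and
`u'(t) ≤ -λ β(t) u(t) + β(t)` on `[0,T]` with `β` continuous nonnegative and `λ > 0`, then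
`u(t) ≤ (1/λ)(1 - e^{-λ B(t)}) + e^{-λ B(t)}` with `B(t) = ∫₀ᵗ β`, hence
`u(t) ≤ max {1, 1/λ}`. -/
theorem stmt3 (T : ℝ) (hT : 0 ≤ T) (u β : ℝ → ℝ) (hu : Differentiable ℝ u)
    (hβc : Continuous β) (hβ0 : ∀ t ∈ Icc 0 T, 0 ≤ β t)
    (lam : ℝ) (hlam : 0 < lam) (hu0 : u 0 = 1)
    (hode : ∀ t ∈ Icc 0 T, deriv u t ≤ -lam * β t * u t + β t) :
    ∀ t ∈ Icc 0 T,
      u t ≤ (1 / lam) * (1 - Real.exp (-lam * ∫ s in (0:ℝ)..t, β s))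
          + Real.exp (-lam * ∫ s in (0:ℝ)..t, β s) ∧
      u t ≤ max 1 (1 / lam) := by
  set B : ℝ → ℝ := fun x => ∫ s in (0:ℝ)..x, β s with hBdef
  have hBd : ∀ x : ℝ, HasDerivAt B (β x) x := by
    intro x
    exact intervalIntegral.integral_hasDerivAt_right (hβc.intervalIntegrable 0 x)
      (hβc.stronglyMeasurableAtFilter _ _) hβc.continuousAt
  set g : ℝ → ℝ := fun x => (u x - 1/lam) * Real.exp (lam * B x) with hgdef
  have hgd : ∀ x : ℝ, HasDerivAt g
      (deriv u x * Real.exp (lam * B x)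
        + (u x - 1/lam) * (Real.exp (lam * B x) * (lam * β x))) x := by
    intro x
    exact ((hu x).hasDerivAt.sub_const _).mul (((hBd x).const_mul lam).exp)
  have hcancel : lam * (1/lam) = 1 := by field_simp
  have hanti : AntitoneOn g (Icc 0 T) := by
    apply antitoneOn_of_deriv_nonpos (convex_Icc 0 T)
    · exact fun x _ => (hgd x).continuousAt.continuousWithinAt
    · intro x hx
      exact (hgd x).differentiableAt.differentiableWithinAt
    · intro x hx
      rw [interior_Icc] at hx
      rw [(hgd x).deriv]
      have hx' : x ∈ Icc 0 T := Ioo_subset_Icc_self hx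
      have h1 := hode x hx'
      have h2 := hβ0 x hx'
      have hE : (0:ℝ) < Real.exp (lam * B x) := Real.exp_pos _
      nlinarith [mul_le_mul_of_nonneg_right h1 hE.le, hcancel, mul_nonneg h2 hE.le]
  intro t ht
  have hB0 : B 0 = 0 := intervalIntegral.integral_same
  have hg0 : g 0 = 1 - 1/lam := by simp [hgdef, hB0, hu0]
  have hgt : (u t - 1/lam) * Real.exp (lam * B t) ≤ 1 - 1/lam := by
    have := hanti (left_mem_Icc.mpr hT) ht ht.1
    rwa [hg0] at this
  have hBnn : 0 ≤ B t :=
    intervalIntegral.integral_nonneg ht.1 (fun s hs => hβ0 s ⟨hs.1, hs.2.trans ht.2⟩)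
  have he : (0:ℝ) < Real.exp (-lam * B t) := Real.exp_pos _
  have heE : Real.exp (-lam * B t) * Real.exp (lam * B t) = 1 := by
    rw [← Real.exp_add]; ring_nf; exact Real.exp_zero
  have he1 : Real.exp (-lam * B t) ≤ 1 := by
    rw [Real.exp_le_one_iff]
    nlinarith
  have key : u t - 1/lam ≤ (1 - 1/lam) * Real.exp (-lam * B t) := by
    have h := mul_le_mul_of_nonneg_right hgt he.le
    have h2 : (u t - 1/lam) * Real.exp (lam * B t) * Real.exp (-lam * B t) = u t - 1/lam := by
      rw [mul_assoc, mul_comm (Real.exp (lam * B t)), heE, mul_one]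
    linarith [h2 ▸ h]
  have hmain : u t ≤ (1 / lam) * (1 - Real.exp (-lam * B t)) + Real.exp (-lam * B t) := by
    have : (1/lam) * (1 - Real.exp (-lam * B t)) + Real.exp (-lam * B t)
        = 1/lam + (1 - 1/lam) * Real.exp (-lam * B t) := by ring
    linarith
  refine ⟨hmain, ?_⟩
  have h1 : (1:ℝ) ≤ max 1 (1/lam) := le_max_left _ _
  have h2 : 1/lam ≤ max 1 (1/lam) := le_max_right _ _
  nlinarith [hmain, he, he1]
end

section
/- Let Σ : [0,T] → Mat(d,d,ℝ) be a differentiable matrix-valued function satisfying dΣ/dt = -½β(t)(D Σ + Σ Dᵀ) + β(t) I with Σ(0) = I, where β(t) ≥ 0 is continuous and D is a fixed matrix with D + Dᵀ ⪰ 2λ_min I for some λ_min > 0. Then for every unit vector x and every t ∈ [0,T], xᵀ Σ(t) x ≤ max{1, 1/λ_min}. -/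
open Set Matrix
attribute [local instance] Matrix.normedAddCommGroup Matrix.normedSpace

/-!
Test `Σ` against the solution `y` of the adjoint equation `y' = (β / 2) Dᵀ y` with terminal value
`y t = x`: the Lyapunov equation makes `(y ⬝ Σ y)' = β ‖y‖²` exactly, while `D + Dᵀ ⪰ 2λ` makes
`‖y s‖² ≤ exp (-λ (B t - B s))` for an antiderivative `B` of `β`. Integrating from `0` to `t` gives
`xᵀ Σ(t) x ≤ e + (1 - e) / λ` with `e = exp (-λ (B t - B 0)) ∈ (0, 1]`, a convex combination of
`1` and `1 / λ`. (A differential inequality for `xᵀ Σ x` alone does not close, as `D` and `Σ`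
need not commute.)
-/

section

variable {n : Type*} [Fintype n]

theorem dotProduct_add_transpose_mulVec_self (A : Matrix n n ℝ) (v : n → ℝ) :
    v ⬝ᵥ ((A + Aᵀ) *ᵥ v) = 2 * (v ⬝ᵥ (Aᵀ *ᵥ v)) := by
  rw [add_mulVec, dotProduct_add, dotProduct_transpose_mulVec A v v]
  ring

theorem HasDerivAt.dotProduct {y w : ℝ → n → ℝ} {y' w' : n → ℝ} {t : ℝ}
    (hy : HasDerivAt y y' t) (hw : HasDerivAt w w' t) :
    HasDerivAt (fun s => y s ⬝ᵥ w s) (y' ⬝ᵥ w t + y t ⬝ᵥ w') t := by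
  have h := HasDerivAt.fun_sum (u := Finset.univ) fun i _ =>
    (hasDerivAt_pi.1 hy i).fun_mul (hasDerivAt_pi.1 hw i)
  simpa only [_root_.dotProduct, ← Finset.sum_add_distrib] using h

theorem HasDerivAt.mulVec {M : ℝ → Matrix n n ℝ} {M' : Matrix n n ℝ} {y : ℝ → n → ℝ}
    {y' : n → ℝ} {t : ℝ} (hM : HasDerivAt M M' t) (hy : HasDerivAt y y' t) :
    HasDerivAt (fun s => M s *ᵥ y s) (M' *ᵥ y t + M t *ᵥ y') t :=
  hasDerivAt_pi.2 fun i => (hasDerivAt_pi.1 hM i).dotProduct hy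

theorem monotoneOn_Icc_of_hasDerivAt_nonneg {f f' : ℝ → ℝ} {a b : ℝ}
    (hf : ∀ s ∈ Icc a b, HasDerivAt f (f' s) s) (hf' : ∀ s ∈ Icc a b, 0 ≤ f' s) :
    MonotoneOn f (Icc a b) :=
  monotoneOn_of_hasDerivWithinAt_nonneg (convex_Icc a b)
    (fun s hs => (hf s hs).continuousAt.continuousWithinAt)
    (fun s hs => (hf s (interior_subset hs)).hasDerivWithinAt)
    (fun s hs => hf' s (interior_subset hs))

theorem exists_hasDerivAt_smul_mulVec (A : Matrix n n ℝ) {B b : ℝ → ℝ}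
    (hB : ∀ s, HasDerivAt B (b s) s) (x : n → ℝ) (t : ℝ) :
    ∃ y : ℝ → n → ℝ, y t = x ∧ ∀ s, HasDerivAt y (b s • (A *ᵥ y s)) s := by
  set L : (n → ℝ) →L[ℝ] (n → ℝ) := LinearMap.toContinuousLinearMap (mulVecLin A)
  refine ⟨fun s => NormedSpace.exp ((B s - B t) • L) x, by simp [NormedSpace.exp_zero], fun s => ?_⟩
  have hexp := (hasDerivAt_exp_smul_const' (𝕂 := ℝ) L (B s - B t)).scomp s ((hB s).sub_const (B t))
  simpa [L] using hexp.clm_apply (hasDerivAt_const s x)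

theorem dotProduct_self_le_exp_mul_of_hasDerivAt {A : Matrix n n ℝ} {μ : ℝ}
    (hA : ∀ v, μ * (v ⬝ᵥ v) ≤ v ⬝ᵥ (A *ᵥ v)) {B b : ℝ → ℝ} {y : ℝ → n → ℝ} {a t : ℝ}
    (hB : ∀ s ∈ Icc a t, HasDerivAt B (b s) s) (hb : ∀ s ∈ Icc a t, 0 ≤ b s)
    (hy : ∀ s ∈ Icc a t, HasDerivAt y (b s • (A *ᵥ y s)) s) {s : ℝ} (hs : s ∈ Icc a t) :
    y s ⬝ᵥ y s ≤ Real.exp (2 * μ * (B s - B t)) * (y t ⬝ᵥ y t) := by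
  set f := fun r => Real.exp (-(2 * μ * B r)) * (y r ⬝ᵥ y r)
  have hf : MonotoneOn f (Icc a t) := by
    refine monotoneOn_Icc_of_hasDerivAt_nonneg
      (f' := fun r => 2 * b r * Real.exp (-(2 * μ * B r)) * (y r ⬝ᵥ (A *ᵥ y r) - μ * (y r ⬝ᵥ y r)))
      (fun r hr => ?_) (fun r hr => ?_)
    · refine ((((hB r hr).const_mul (2 * μ)).fun_neg.exp).fun_mul
        ((hy r hr).dotProduct (hy r hr))).congr_deriv ?_
      simp only [smul_dotProduct, dotProduct_smul, dotProduct_comm (A *ᵥ y r) (y r), smul_eq_mul]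
      ring
    · have := sub_nonneg.2 (hA (y r))
      have := hb r hr
      positivity
  have hst := hf hs (right_mem_Icc.2 (hs.1.trans hs.2)) hs.2
  have hexp : Real.exp (2 * μ * (B s - B t)) =
      Real.exp (2 * μ * B s) * Real.exp (-(2 * μ * B t)) := by
    rw [← Real.exp_add]; ring_nf
  rw [hexp, mul_assoc, ← div_le_iff₀' (Real.exp_pos _), div_eq_inv_mul, ← Real.exp_neg]
  exact hst

theorem sub_le_of_hasDerivAt_le_mul_exp {φ g B β : ℝ → ℝ} {lam a t : ℝ} (hlam : lam ≠ 0)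
    (hat : a ≤ t) (hB : ∀ s ∈ Icc a t, HasDerivAt B (β s) s) (hβ : ∀ s ∈ Icc a t, 0 ≤ β s)
    (hφ : ∀ s ∈ Icc a t, HasDerivAt φ (β s * g s) s)
    (hg : ∀ s ∈ Icc a t, g s ≤ Real.exp (lam * (B s - B t))) :
    φ t - φ a ≤ (1 - Real.exp (lam * (B a - B t))) / lam := by
  have hψ : MonotoneOn (fun s => Real.exp (lam * (B s - B t)) / lam - φ s) (Icc a t) := by
    refine monotoneOn_Icc_of_hasDerivAt_nonneg
      (f' := fun s => β s * (Real.exp (lam * (B s - B t)) - g s)) (fun s hs => ?_) (fun s hs => ?_)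
    · refine (((((hB s hs).sub_const (B t)).const_mul lam).exp.div_const lam).fun_sub
        (hφ s hs)).congr_deriv ?_
      field_simp
    · exact mul_nonneg (hβ s hs) (sub_nonneg.2 (hg s hs))
  have := hψ (left_mem_Icc.2 hat) (right_mem_Icc.2 hat) hat
  simp only [sub_self, mul_zero, Real.exp_zero] at this
  rw [sub_div]
  linarith

theorem hasDerivAt_dotProduct_mulVec_of_lyapunov [DecidableEq n] {D : Matrix n n ℝ}
    {S : ℝ → Matrix n n ℝ} {y : ℝ → n → ℝ} {c s : ℝ}
    (hS : HasDerivAt S ((-((1 / 2) * c)) • (D * S s + S s * Dᵀ) + c • (1 : Matrix n n ℝ)) s)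
    (hy : HasDerivAt y ((c / 2) • (Dᵀ *ᵥ y s)) s) :
    HasDerivAt (fun r => y r ⬝ᵥ (S r *ᵥ y r)) (c * (y s ⬝ᵥ y s)) s := by
  refine (hy.dotProduct (hS.mulVec hy)).congr_deriv ?_
  have hD : (Dᵀ *ᵥ y s) ⬝ᵥ (S s *ᵥ y s) = y s ⬝ᵥ ((D * S s) *ᵥ y s) := by
    rw [mulVec_transpose, ← dotProduct_mulVec, mulVec_mulVec]
  simp only [smul_dotProduct, add_mulVec, smul_mulVec, mulVec_smul, one_mulVec, dotProduct_add,
    dotProduct_smul, smul_eq_mul, mulVec_mulVec, hD]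
  ring

end

theorem stmt5_general (d : ℕ) (T : ℝ)
    (S : ℝ → Matrix (Fin d) (Fin d) ℝ) (hS : Differentiable ℝ S)
    (β : ℝ → ℝ) (hβc : Continuous β) (hβ0 : ∀ t ∈ Icc 0 T, 0 ≤ β t)
    (D : Matrix (Fin d) (Fin d) ℝ) (lam : ℝ) (hlam : 0 < lam)
    (hD : ∀ x : Fin d → ℝ, 2 * lam * (x ⬝ᵥ x) ≤ x ⬝ᵥ ((D + Dᵀ) *ᵥ x))
    (hS0 : S 0 = 1)
    (hode : ∀ t ∈ Icc 0 T,
      deriv S t = (-(((1:ℝ)/2) * β t)) • (D * S t + S t * Dᵀ) + β t • (1 : Matrix (Fin d) (Fin d) ℝ)) :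
    ∀ x : Fin d → ℝ, x ⬝ᵥ x = 1 → ∀ t ∈ Icc 0 T, x ⬝ᵥ (S t *ᵥ x) ≤ max 1 (1 / lam) := by
  intro x hx t ⟨ht0, htT⟩
  have hβ : ∀ s ∈ Icc 0 t, 0 ≤ β s := fun s hs => hβ0 s ⟨hs.1, hs.2.trans htT⟩
  have hDt : ∀ v, lam * (v ⬝ᵥ v) ≤ v ⬝ᵥ (Dᵀ *ᵥ v) := fun v => by
    linarith [hD v, dotProduct_add_transpose_mulVec_self D v]
  obtain ⟨B, hB⟩ : ∃ B : ℝ → ℝ, ∀ s, HasDerivAt B (β s) s :=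
    ⟨_, fun s => (hβc.integral_hasStrictDerivAt 0 s).hasDerivAt⟩
  obtain ⟨y, hyt, hy⟩ := exists_hasDerivAt_smul_mulVec Dᵀ (fun s => (hB s).div_const 2) x t
  have hyy : ∀ s ∈ Icc 0 t, y s ⬝ᵥ y s ≤ Real.exp (lam * (B s - B t)) := fun s hs => by
    have := dotProduct_self_le_exp_mul_of_hasDerivAt hDt (fun r _ => (hB r).div_const 2)
      (fun r hr => div_nonneg (hβ r hr) zero_le_two) (fun r _ => hy r) hs
    rwa [hyt, hx, mul_one, show 2 * lam * (B s / 2 - B t / 2) = lam * (B s - B t) by ring] at this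
  have hφ := sub_le_of_hasDerivAt_le_mul_exp hlam.ne' ht0 (fun s _ => hB s) hβ
    (fun s hs => hasDerivAt_dotProduct_mulVec_of_lyapunov
      (hode s ⟨hs.1, hs.2.trans htT⟩ ▸ (hS s).hasDerivAt) (hy s)) hyy
  rw [hyt, hS0, one_mulVec] at hφ
  set e := Real.exp (lam * (B 0 - B t))
  have hBt : B 0 ≤ B t := monotoneOn_Icc_of_hasDerivAt_nonneg (fun s _ => hB s) hβ
    (left_mem_Icc.2 ht0) (right_mem_Icc.2 ht0) ht0
  have he : e ≤ 1 := Real.exp_le_one_iff.2 (by nlinarith)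
  calc x ⬝ᵥ (S t *ᵥ x) ≤ e • 1 + (1 - e) • (1 / lam) := by
        rw [smul_eq_mul, smul_eq_mul, mul_one_div]
        linarith [hyy 0 (left_mem_Icc.2 ht0)]
    _ ≤ max 1 (1 / lam) :=
        Convex.combo_le_max _ _ (Real.exp_pos _).le (sub_nonneg.2 he) (add_sub_cancel _ _)

/-- Bound on the quadratic form of the solution of the Lyapunov-type matrix ODE
`dΣ/dt = -½β(t)(DΣ + ΣDᵀ) + β(t)I`, `Σ(0) = I`, when `D + Dᵀ ⪰ 2λ_min I`. -/
theorem stmt5 (d : ℕ) (T : ℝ) (hT : 0 ≤ T)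
    (S : ℝ → Matrix (Fin d) (Fin d) ℝ) (hS : Differentiable ℝ S)
    (β : ℝ → ℝ) (hβc : Continuous β) (hβ0 : ∀ t ∈ Icc 0 T, 0 ≤ β t)
    (D : Matrix (Fin d) (Fin d) ℝ) (lam : ℝ) (hlam : 0 < lam)
    (hD : ∀ x : Fin d → ℝ, 2 * lam * (x ⬝ᵥ x) ≤ x ⬝ᵥ ((D + Dᵀ) *ᵥ x))
    (hS0 : S 0 = 1)
    (hode : ∀ t ∈ Icc 0 T,
      deriv S t = (-(((1:ℝ)/2) * β t)) • (D * S t + S t * Dᵀ) + β t • (1 : Matrix (Fin d) (Fin d) ℝ)) :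
    ∀ x : Fin d → ℝ, x ⬝ᵥ x = 1 → ∀ t ∈ Icc 0 T, x ⬝ᵥ (S t *ᵥ x) ≤ max 1 (1 / lam) :=
  stmt5_general d T S hS β hβc hβ0 D lam hlam hD hS0 hode
end
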